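/- Let H be an orientation of the path on four vertices and let D be an H-free oriented graph. Suppose V(D) is partitioned into sets Q, R, S such that there is no arc between Q and S, every r ∈ R has both an in-neighbor and an out-neighbor in Q, and every s ∈ S has a neighbor in R. Let γ be an integer such that χ⃗(N(r)) ≤ γ for every r ∈ R. Then χ⃗(S) ≤ 2γ. -/

import Mathlib

namespace DichiP4

variable {V : Type*}

/-- An oriented graph: an arc relation with no digons (hence also no loops). -/
def Oriented (A : V → V → Prop) : Prop := ∀ u v, A u v → ¬ A v u

/-- Adjacency in the underlying (undirected) graph. -/
def Adj (A : V → V → Prop) (u v : V) : Prop := A u v ∨ A v u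

/-- The neighborhood `N(v)` of a vertex in the underlying graph. -/
def nbr (A : V → V → Prop) (v : V) : Set V := {w | Adj A v w}

/-- `N(S)`: the neighborhood of a set of vertices. -/
def nbrSet (A : V → V → Prop) (S : Set V) : Set V := (⋃ v ∈ S, nbr A v) \ S

/-- `N[S]`: the closed neighborhood of a set of vertices. -/
def cnbrSet (A : V → V → Prop) (S : Set V) : Set V := ⋃ v ∈ S, insert v (nbr A v)

/-- A clique in the underlying graph (= the vertex set of a tournament). -/
def IsClique (A : V → V → Prop) (K : Set V) : Prop :=
  ∀ u ∈ K, ∀ v ∈ K, u ≠ v → Adj A u v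

/-- The clique number `ω(D)` of the underlying graph. -/
noncomputable def cliqueNum (A : V → V → Prop) : ℕ :=
  sSup {n | ∃ K : Set V, IsClique A K ∧ K.Finite ∧ K.ncard = n}

/-- The set `s` induces an acyclic subdigraph (no directed cycle within `s`). -/
def AcyclicOn (A : V → V → Prop) (s : Set V) : Prop :=
  ∀ v, ¬ Relation.TransGen (fun x y => x ∈ s ∧ y ∈ s ∧ A x y) v v

/-- The set `s` admits a dicoloring with `k` colors: every color class induces an
acyclic subdigraph. -/
def DicolorableOn (A : V → V → Prop) (s : Set V) (k : ℕ) : Prop :=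
  ∃ c : V → ℕ, (∀ v ∈ s, c v < k) ∧ ∀ i : ℕ, AcyclicOn A {v | v ∈ s ∧ c v = i}

/-- The dichromatic number `χ⃗(s)` of the subdigraph induced by `s`. -/
noncomputable def dichi (A : V → V → Prop) (s : Set V) : ℕ :=
  sInf {k | DicolorableOn A s k}

/-- `A` has an induced subdigraph isomorphic to `B`. -/
def HasInducedCopy {W : Type*} (A : V → V → Prop) (B : W → W → Prop) : Prop :=
  ∃ f : W → V, Function.Injective f ∧ ∀ x y : W, B x y ↔ A (f x) (f y)

/-- `A` is `B`-free: no induced subdigraph of `A` is isomorphic to `B`. -/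
def Free {W : Type*} (A : V → V → Prop) (B : W → W → Prop) : Prop :=
  ¬ HasInducedCopy A B

/-- `P⃗4`: the orientation of the path `0 – 1 – 2 – 3` with arcs `0→1, 1→2, 2→3`. -/
def P4vec : Fin 4 → Fin 4 → Prop := fun x y =>
  (x = 0 ∧ y = 1) ∨ (x = 1 ∧ y = 2) ∨ (x = 2 ∧ y = 3)

/-- `A⃗4`: the orientation of the path `0 – 1 – 2 – 3` with arcs `1→0, 1→2, 3→2`. -/
def A4vec : Fin 4 → Fin 4 → Prop := fun x y =>
  (x = 1 ∧ y = 0) ∨ (x = 1 ∧ y = 2) ∨ (x = 3 ∧ y = 2)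

/-- `Q⃗4`: the orientation of the path `0 – 1 – 2 – 3` with arcs `0→1, 2→1, 3→2`. -/
def Q4vec : Fin 4 → Fin 4 → Prop := fun x y =>
  (x = 0 ∧ y = 1) ∨ (x = 2 ∧ y = 1) ∨ (x = 3 ∧ y = 2)

/-- `Q⃗4'`: the orientation of the path `0 – 1 – 2 – 3` with arcs `1→0, 2→1, 2→3`. -/
def Q4'vec : Fin 4 → Fin 4 → Prop := fun x y =>
  (x = 1 ∧ y = 0) ∨ (x = 2 ∧ y = 1) ∨ (x = 2 ∧ y = 3)

/-- `B` is an orientation of the path on four vertices `0 – 1 – 2 – 3`. -/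
def IsP4Orientation (B : Fin 4 → Fin 4 → Prop) : Prop :=
  Oriented B ∧ ∀ x y : Fin 4, Adj B x y ↔ ((x : ℕ) + 1 = (y : ℕ) ∨ (y : ℕ) + 1 = (x : ℕ))

/-- `p 1 → p 2 → ⋯ → p ℓ` is a directed path in `A` (distinct vertices). -/
def IsDirPath (A : V → V → Prop) (ℓ : ℕ) (p : ℕ → V) : Prop :=
  1 ≤ ℓ ∧ Set.InjOn p (Set.Icc 1 ℓ) ∧ ∀ i, 1 ≤ i → i < ℓ → A (p i) (p (i + 1))

/-- A directed path `p 1 → ⋯ → p ℓ` is forward-induced: no arc `(p i, p j)` with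
`j > i + 1`. -/
def ForwardInduced (A : V → V → Prop) (ℓ : ℕ) (p : ℕ → V) : Prop :=
  ∀ i j, 1 ≤ i → j ≤ ℓ → i + 1 < j → ¬ A (p i) (p j)

/-- `p 1 → ⋯ → p ℓ` is a shortest directed path from `p 1` to `p ℓ`. -/
def IsShortestDirPath (A : V → V → Prop) (ℓ : ℕ) (p : ℕ → V) : Prop :=
  IsDirPath A ℓ p ∧
    ∀ (m : ℕ) (q : ℕ → V), IsDirPath A m q → q 1 = p 1 → q m = p ℓ → ℓ ≤ m

/-- The vertex set `V(P)` of the path `p 1, …, p ℓ`. -/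
def pathSet (ℓ : ℕ) (p : ℕ → V) : Set V := p '' Set.Icc 1 ℓ

/-- `N(P)`: the neighborhood of the vertex set of the path. -/
def pathNbrs (A : V → V → Prop) (ℓ : ℕ) (p : ℕ → V) : Set V := nbrSet A (pathSet ℓ p)

/-- `F i`: vertices of `N(P)` whose first neighbor on the path is `p i`. -/
def Fatt (A : V → V → Prop) (ℓ : ℕ) (p : ℕ → V) (i : ℕ) : Set V :=
  {v ∈ pathNbrs A ℓ p | Adj A v (p i) ∧ ∀ i', 1 ≤ i' → i' < i → ¬ Adj A v (p i')}

/-- `L j`: vertices of `N(P)` whose last neighbor on the path is `p j`. -/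
def Latt (A : V → V → Prop) (ℓ : ℕ) (p : ℕ → V) (j : ℕ) : Set V :=
  {v ∈ pathNbrs A ℓ p | Adj A v (p j) ∧ ∀ j', j < j' → j' ≤ ℓ → ¬ Adj A v (p j')}

/-- `F i ⁺`: in-neighbors of `p i` in `F i`. -/
def FattP (A : V → V → Prop) (ℓ : ℕ) (p : ℕ → V) (i : ℕ) : Set V :=
  {v ∈ Fatt A ℓ p i | A v (p i)}

/-- `F i ⁻`: out-neighbors of `p i` in `F i`. -/
def FattM (A : V → V → Prop) (ℓ : ℕ) (p : ℕ → V) (i : ℕ) : Set V :=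
  {v ∈ Fatt A ℓ p i | A (p i) v}

/-- `L j ⁺`: in-neighbors of `p j` in `L j`. -/
def LattP (A : V → V → Prop) (ℓ : ℕ) (p : ℕ → V) (j : ℕ) : Set V :=
  {v ∈ Latt A ℓ p j | A v (p j)}

/-- `L j ⁻`: out-neighbors of `p j` in `L j`. -/
def LattM (A : V → V → Prop) (ℓ : ℕ) (p : ℕ → V) (j : ℕ) : Set V :=
  {v ∈ Latt A ℓ p j | A (p j) v}

/-- `W^p = (F₂⁻ ∪ ⋯ ∪ F_{ℓ-1}⁻) ∪ (L₂⁺ ∪ ⋯ ∪ L_{ℓ-1}⁺)`. -/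
def Wp (A : V → V → Prop) (ℓ : ℕ) (p : ℕ → V) : Set V :=
  (⋃ i ∈ Set.Icc 2 (ℓ - 1), FattM A ℓ p i) ∪ ⋃ i ∈ Set.Icc 2 (ℓ - 1), LattP A ℓ p i

/-- `W^a = (F₂⁺ ∪ ⋯ ∪ F_{ℓ-1}⁺) ∪ (L₂⁻ ∪ ⋯ ∪ L_{ℓ-1}⁻)`. -/
def Wa (A : V → V → Prop) (ℓ : ℕ) (p : ℕ → V) : Set V :=
  (⋃ i ∈ Set.Icc 2 (ℓ - 1), FattP A ℓ p i) ∪ ⋃ i ∈ Set.Icc 2 (ℓ - 1), LattM A ℓ p i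

/-- `R^p = N(P) \ (N({p1, p2, pℓ}) ∪ W^p)`. -/
def Rp (A : V → V → Prop) (ℓ : ℕ) (p : ℕ → V) : Set V :=
  pathNbrs A ℓ p \ (nbrSet A {p 1, p 2, p ℓ} ∪ Wp A ℓ p)

/-- `R^a = N(P) \ (N({p1, pℓ}) ∪ W^a)`. -/
def Ra (A : V → V → Prop) (ℓ : ℕ) (p : ℕ → V) : Set V :=
  pathNbrs A ℓ p \ (nbrSet A {p 1, p ℓ} ∪ Wa A ℓ p)

/-- A dipolar set: a nonempty set `S` partitioned into `S⁺` (no out-neighbor outside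
`S`) and `S⁻` (no in-neighbor outside `S`). -/
def IsDipolar (A : V → V → Prop) (S : Set V) : Prop :=
  S.Nonempty ∧ ∃ Sp Sm : Set V, Sp ∪ Sm = S ∧ Disjoint Sp Sm ∧
    (∀ v ∈ Sp, ∀ w, w ∉ S → ¬ A v w) ∧ ∀ v ∈ Sm, ∀ w, w ∉ S → ¬ A w v

/-- Reachability by a directed path staying inside `s`. -/
def ReachIn (A : V → V → Prop) (s : Set V) (u v : V) : Prop :=
  Relation.ReflTransGen (fun x y => x ∈ s ∧ y ∈ s ∧ A x y) u v

/-- A digraph is strongly connected. -/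
def StronglyConnected (A : V → V → Prop) : Prop :=
  ∀ u v : V, Relation.ReflTransGen A u v

/-- `t` is a strongly connected component of the subdigraph induced by `s`. -/
def IsSCCOf (A : V → V → Prop) (s t : Set V) : Prop :=
  t ⊆ s ∧ t.Nonempty ∧ (∀ u ∈ t, ∀ v ∈ t, ReachIn A s u v) ∧
    ∀ u ∈ t, ∀ v ∈ s, ReachIn A s u v → ReachIn A s v u → v ∈ t

/-- A source strongly connected component: all arcs between it and the rest of `s`
begin in it. -/
def IsSourceSCC (A : V → V → Prop) (s t : Set V) : Prop :=
  IsSCCOf A s t ∧ ∀ u ∈ s, ∀ v ∈ t, A u v → u ∈ t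

/-- A sink strongly connected component: all arcs between it and the rest of `s`
end in it. -/
def IsSinkSCC (A : V → V → Prop) (s t : Set V) : Prop :=
  IsSCCOf A s t ∧ ∀ u ∈ t, ∀ v ∈ s, A u v → v ∈ t

/-- `K` (a tournament of maximum order) and the directed path `p 1 → ⋯ → p ℓ`
(from a source SCC of `D[K]` to a sink SCC of `D[K]`) form a closed tournament
`C = K ∪ V(P)`. -/
def FormsClosedTournament (A : V → V → Prop) (K : Set V) (ℓ : ℕ) (p : ℕ → V) : Prop :=
  IsClique A K ∧ K.Finite ∧ K.ncard = cliqueNum A ∧ IsDirPath A ℓ p ∧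
    (∃ t, IsSourceSCC A K t ∧ p 1 ∈ t) ∧ ∃ t, IsSinkSCC A K t ∧ p ℓ ∈ t

/-- `K` and `P` form a path-minimizing closed tournament: `|P|` is minimum among
all pairs forming a closed tournament. -/
def FormsPathMinClosedTournament (A : V → V → Prop) (K : Set V) (ℓ : ℕ) (p : ℕ → V) :
    Prop :=
  FormsClosedTournament A K ℓ p ∧
    ∀ (K' : Set V) (ℓ' : ℕ) (p' : ℕ → V), FormsClosedTournament A K' ℓ' p' → ℓ ≤ ℓ'

/-- The strong neighborhood of `S`: neighbors of `S` having both an in-neighbor and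
an out-neighbor in `S`. -/
def strongNbrs (A : V → V → Prop) (S : Set V) : Set V :=
  {v ∈ nbrSet A S | (∃ u ∈ S, A u v) ∧ ∃ u ∈ S, A v u}

/-!
Order the vertices and send each `s ∈ S` to its first neighbour `ρ s` in `R`. Split `S` according
to the direction of the arc between `s` and `ρ s`, and in each part colour `s` as it is coloured
in a fixed `γ`-dicolouring of `N(ρ s)`. If `t ∈ S` is joined to `s` but not to `r = ρ s`, then
a neighbour `q ∈ Q` of `r`, chosen with the right orientation, makes `q – r – s – t` (or its
reverse) an induced copy of `H`. So, depending only on `H`, along every arc of a part either the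
head is adjacent to `ρ` of the tail or the tail to `ρ` of the head; hence `ρ` is monotone along
arcs, a monochromatic cycle has constant `ρ`, and it lies in one colour class of a single `N(r)`.
-/

theorem _root_.Relation.TransGen.level_cycle_of_antitone {α β : Type*} [PartialOrder β]
    {P : α → α → Prop} {g : α → β} (hg : ∀ x y, P x y → g y ≤ g x) {v : α}
    (h : Relation.TransGen P v v) :
    Relation.TransGen (fun x y => P x y ∧ g x = g v ∧ g y = g v) v v := by
  have hle : ∀ {a b}, Relation.ReflTransGen P a b → g b ≤ g a := fun hab => by
    induction hab with
    | refl => exact le_rfl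
    | tail _ hbc ih => exact (hg _ _ hbc).trans ih
  -- every vertex of a closed walk through `v` reaches `v` and is reached from it
  suffices hwalk : ∀ a, Relation.TransGen P a v → Relation.ReflTransGen P v a →
      Relation.TransGen (fun x y => P x y ∧ Relation.ReflTransGen P v x ∧
        Relation.ReflTransGen P y v) a v by
    refine Relation.TransGen.mono (fun x y ⟨hxy, hvx, hyv⟩ => ?_) _ _ (hwalk v h .refl)
    have hyx := hg x y hxy
    exact ⟨hxy, le_antisymm (hle hvx) ((hle hyv).trans hyx),
      le_antisymm (hyx.trans (hle hvx)) (hle hyv)⟩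
  intro a hav
  induction hav using Relation.TransGen.head_induction_on with
  | single hav => exact fun hva => .single ⟨hav, hva, .refl⟩
  | head hac hcv ih => exact fun hva => .head ⟨hac, hva, hcv.to_reflTransGen⟩ (ih (hva.tail hac))

variable {A : V → V → Prop}

theorem adj_comm {u v : V} : Adj A u v ↔ Adj A v u := Or.comm

theorem Oriented.irrefl (hA : Oriented A) (v : V) : ¬ A v v := fun h => hA v v h h

theorem Oriented.ne_of_adj (hA : Oriented A) {u v : V} (h : Adj A u v) : u ≠ v := by
  rintro rfl
  exact h.elim (hA.irrefl u) (hA.irrefl u)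

theorem AcyclicOn.mono {s t : Set V} (ht : AcyclicOn A t) (hst : s ⊆ t) : AcyclicOn A s :=
  fun v hv => ht v (Relation.TransGen.mono (fun _ _ ⟨hx, hy, hxy⟩ => ⟨hst hx, hst hy, hxy⟩) _ _ hv)

theorem DicolorableOn.subset {s t : Set V} {k : ℕ} (ht : DicolorableOn A t k) (hst : s ⊆ t) :
    DicolorableOn A s k := by
  obtain ⟨c, hlt, hacyc⟩ := ht
  exact ⟨c, fun v hv => hlt v (hst hv),
    fun i => (hacyc i).mono fun v ⟨hv, hci⟩ => ⟨hst hv, hci⟩⟩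

theorem DicolorableOn.union {s t : Set V} {k l : ℕ} (hs : DicolorableOn A s k)
    (ht : DicolorableOn A t l) : DicolorableOn A (s ∪ t) (k + l) := by
  classical
  obtain ⟨c, hcs, hcacyc⟩ := hs
  obtain ⟨d, hdt, hdacyc⟩ := ht
  refine ⟨fun v => if v ∈ s then c v else k + d v, fun v hv => ?_, fun i => ?_⟩
  · by_cases hvs : v ∈ s
    · simpa [hvs] using (hcs v hvs).trans_le (Nat.le_add_right k l)
    · simpa [hvs] using hdt v (hv.resolve_left hvs)
  · by_cases hik : i < k
    · refine (hcacyc i).mono fun v ⟨hv, hvi⟩ => ?_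
      by_cases hvs : v ∈ s
      · simp only [hvs, if_true] at hvi
        exact ⟨hvs, hvi⟩
      · simp only [hvs, if_false] at hvi
        omega
    · refine (hdacyc (i - k)).mono fun v ⟨hv, hvi⟩ => ?_
      by_cases hvs : v ∈ s
      · simp only [hvs, if_true] at hvi
        exact absurd (hvi ▸ hcs v hvs) hik
      · simp only [hvs, if_false] at hvi
        exact ⟨hv.resolve_left hvs, by omega⟩

theorem dicolorableOn_card [Fintype V] (hA : Oriented A) (s : Set V) :
    DicolorableOn A s (Fintype.card V) := by
  refine ⟨fun v => Fintype.equivFin V v, fun v _ => (Fintype.equivFin V v).isLt, fun i v hv => ?_⟩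
  obtain ⟨w, ⟨⟨-, hvi⟩, ⟨-, hwi⟩, hvw⟩, -⟩ := Relation.TransGen.head'_iff.mp hv
  have hvw' : v = w := (Fintype.equivFin V).injective (Fin.val_injective (hvi.trans hwi.symm))
  exact hA.irrefl v (hvw' ▸ hvw)

theorem dicolorableOn_of_dichi_le [Fintype V] (hA : Oriented A) {s : Set V} {k : ℕ}
    (h : dichi A s ≤ k) : DicolorableOn A s k := by
  obtain ⟨c, hlt, hacyc⟩ := Nat.sInf_mem (s := {k | DicolorableOn A s k})
    ⟨_, dicolorableOn_card hA s⟩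
  exact ⟨c, fun v hv => (hlt v hv).trans_le h, hacyc⟩

theorem dichi_le_of_dicolorableOn {s : Set V} {k : ℕ} (h : DicolorableOn A s k) :
    dichi A s ≤ k :=
  Nat.sInf_le h

def IsLeastNbrIn {β : Type*} [LE β] (A : V → V → Prop) (key : V → β) (R : Set V) (s r : V) :
    Prop :=
  r ∈ R ∧ Adj A r s ∧ ∀ r' ∈ R, Adj A r' s → key r ≤ key r'

theorem exists_isLeastNbrIn [Finite V] {β : Type*} [LinearOrder β] (key : V → β) {R S : Set V}
    (hS : ∀ s ∈ S, ∃ r ∈ R, Adj A s r) : ∃ ρ : V → V, ∀ s ∈ S, IsLeastNbrIn A key R s (ρ s) := by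
  have hleast : ∀ s ∈ S, ∃ r, IsLeastNbrIn A key R s r := by
    intro s hs
    obtain ⟨r, hr, hsr⟩ := hS s hs
    obtain ⟨r₀, ⟨hr₀, hr₀s⟩, hr₀min⟩ := Set.exists_min_image {r | r ∈ R ∧ Adj A r s} key
      (Set.toFinite _) ⟨r, hr, adj_comm.1 hsr⟩
    exact ⟨r₀, hr₀, hr₀s, fun r' hr' hr's => hr₀min r' ⟨hr', hr's⟩⟩
  choose! ρ hρ using hleast
  exact ⟨ρ, hρ⟩

theorem dicolorableOn_of_isLeastNbrIn {β : Type*} [PartialOrder β] {key : V → β}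
    (hkey : Function.Injective key) {R T : Set V} {ρ : V → V} {k : ℕ}
    (hcol : ∀ r ∈ R, DicolorableOn A (nbr A r) k)
    (hρ : ∀ s ∈ T, IsLeastNbrIn A key R s (ρ s))
    (htransfer : (∀ s ∈ T, ∀ t ∈ T, A s t → Adj A (ρ s) t) ∨
      (∀ s ∈ T, ∀ t ∈ T, A s t → Adj A (ρ t) s)) :
    DicolorableOn A T k := by
  choose! c hclt hcacyc using hcol
  refine ⟨fun s => c (ρ s) s, fun s hs => hclt _ (hρ s hs).1 s (hρ s hs).2.1,
    fun i v hcyc => ?_⟩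
  obtain ⟨w, ⟨⟨hvT, -⟩, -⟩, -⟩ := Relation.TransGen.head'_iff.mp hcyc
  have hlevel : Relation.TransGen (fun x y => ((x ∈ T ∧ c (ρ x) x = i) ∧
      (y ∈ T ∧ c (ρ y) y = i) ∧ A x y) ∧ key (ρ x) = key (ρ v) ∧ key (ρ y) = key (ρ v)) v v := by
    rcases htransfer with h | h
    · exact hcyc.level_cycle_of_antitone (g := fun s => key (ρ s))
        fun x y ⟨⟨hxT, _⟩, ⟨hyT, _⟩, hxy⟩ => (hρ y hyT).2.2 _ (hρ x hxT).1 (h x hxT y hyT hxy)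
    · exact hcyc.level_cycle_of_antitone (g := fun s => OrderDual.toDual (key (ρ s)))
        fun x y ⟨⟨hxT, _⟩, ⟨hyT, _⟩, hxy⟩ => (hρ x hxT).2.2 _ (hρ y hyT).1 (h x hxT y hyT hxy)
  refine hcacyc (ρ v) (hρ v hvT).1 i v (Relation.TransGen.mono ?_ _ _ hlevel)
  rintro x y ⟨⟨⟨hxT, hxi⟩, ⟨hyT, hyi⟩, hxy⟩, hx, hy⟩
  have hρx := (hρ x hxT).2.1
  have hρy := (hρ y hyT).2.1
  rw [hkey hx] at hxi hρx
  rw [hkey hy] at hyi hρy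
  exact ⟨⟨hρx, hxi⟩, ⟨hρy, hyi⟩, hxy⟩

def ArcLike {W : Type*} (B : W → W → Prop) (A : V → V → Prop) (i j : W) (u v : V) : Prop :=
  (B i j ∧ A u v) ∨ (B j i ∧ A v u)

section ArcLike

variable {W : Type*} {B : W → W → Prop} {i j : W} {u v : V}

theorem arcLike_comm : ArcLike B A i j u v ↔ ArcLike B A j i v u := Or.comm

theorem ArcLike.adj (h : ArcLike B A i j u v) : Adj A u v :=
  h.imp And.right And.right

theorem ArcLike.arc (hB : Oriented B) (h : ArcLike B A i j u v) (hij : B i j) : A u v :=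
  h.elim And.right fun h' => absurd hij (hB _ _ h'.1)

theorem ArcLike.arc_symm (hB : Oriented B) (h : ArcLike B A i j u v) (hji : B j i) : A v u :=
  h.elim (fun h' => absurd hji (hB _ _ h'.1)) And.right

theorem arcLike_or_arcLike_of_adj (hij : Adj B i j) (huv : Adj A u v) :
    ArcLike B A i j u v ∨ ArcLike B A j i u v := by
  rcases hij with hij | hji <;> rcases huv with huv | hvu
  · exact .inl (.inl ⟨hij, huv⟩)
  · exact .inr (.inr ⟨hij, hvu⟩)
  · exact .inr (.inl ⟨hji, huv⟩)
  · exact .inl (.inr ⟨hji, hvu⟩)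

theorem exists_arcLike_mem (hij : Adj B i j) {Q : Set V} {r : V}
    (hr : (∃ q ∈ Q, A q r) ∧ ∃ q ∈ Q, A r q) : ∃ q ∈ Q, ArcLike B A i j q r := by
  rcases hij with hij | hji
  · obtain ⟨q, hq, hqr⟩ := hr.1
    exact ⟨q, hq, .inl ⟨hij, hqr⟩⟩
  · obtain ⟨q, hq, hrq⟩ := hr.2
    exact ⟨q, hq, .inr ⟨hji, hrq⟩⟩

theorem forall_arc_adj_or_of_arcLike (hij : Adj B i j) {T : Set V} {ρ : V → V}
    (h : ∀ s ∈ T, ∀ t ∈ T, ArcLike B A i j s t → Adj A (ρ s) t) :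
    (∀ s ∈ T, ∀ t ∈ T, A s t → Adj A (ρ s) t) ∨ (∀ s ∈ T, ∀ t ∈ T, A s t → Adj A (ρ t) s) :=
  hij.imp (fun hij s hs t ht hst => h s hs t ht (.inl ⟨hij, hst⟩))
    (fun hji s hs t ht hst => h t ht s hs (.inr ⟨hji, hst⟩))

end ArcLike

theorem hasInducedCopy_of_forall_arc {W : Type*} {B : W → W → Prop} (hA : Oriented A)
    {f : W → V} (hf : Function.Injective f) (harc : ∀ x y, B x y → A (f x) (f y))
    (hnon : ∀ x y, x ≠ y → ¬ Adj B x y → ¬ Adj A (f x) (f y)) : HasInducedCopy A B := by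
  refine ⟨f, hf, fun x y => ⟨harc x y, fun hxy => ?_⟩⟩
  by_contra hBxy
  by_cases hByx : B y x
  · exact hA _ _ hxy (harc y x hByx)
  · rcases eq_or_ne x y with rfl | hne
    · exact hA.irrefl _ hxy
    · exact hnon x y hne (fun h => h.elim hBxy hByx) (Or.inl hxy)

theorem hasInducedCopy_of_arcLike {H : Fin 4 → Fin 4 → Prop} (hH : IsP4Orientation H)
    (hA : Oriented A) {v₀ v₁ v₂ v₃ : V} (h₀₁ : ArcLike H A 0 1 v₀ v₁)
    (h₁₂ : ArcLike H A 1 2 v₁ v₂) (h₂₃ : ArcLike H A 2 3 v₂ v₃) (h₀₂ : v₀ ≠ v₂) (h₀₃ : v₀ ≠ v₃)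
    (h₁₃ : v₁ ≠ v₃) (n₀₂ : ¬ Adj A v₀ v₂) (n₀₃ : ¬ Adj A v₀ v₃) (n₁₃ : ¬ Adj A v₁ v₃) :
    HasInducedCopy A H := by
  have h₀₁' := hA.ne_of_adj h₀₁.adj
  have h₁₂' := hA.ne_of_adj h₁₂.adj
  have h₂₃' := hA.ne_of_adj h₂₃.adj
  refine hasInducedCopy_of_forall_arc hA (f := ![v₀, v₁, v₂, v₃]) ?_ ?_ ?_
  · intro x y hxy
    fin_cases x <;> fin_cases y <;> simp_all [eq_comm]
  · intro x y hxy
    have hc := (hH.2 x y).1 (Or.inl hxy)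
    fin_cases x <;> fin_cases y <;> simp at hc ⊢ <;>
      first
      | exact h₀₁.arc hH.1 hxy | exact h₀₁.arc_symm hH.1 hxy
      | exact h₁₂.arc hH.1 hxy | exact h₁₂.arc_symm hH.1 hxy
      | exact h₂₃.arc hH.1 hxy | exact h₂₃.arc_symm hH.1 hxy
  · intro x y hne hn
    have hc : ¬ ((x : ℕ) + 1 = y ∨ (y : ℕ) + 1 = x) := fun h => hn ((hH.2 x y).2 h)
    fin_cases x <;> fin_cases y <;> simp at hne hc ⊢ <;> simp_all [adj_comm]

theorem adj_of_arcLike_of_arcLike {H : Fin 4 → Fin 4 → Prop} (hH : IsP4Orientation H)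
    (hA : Oriented A) (hfree : Free A H) {Q R S : Set V} (hQS : Disjoint Q S)
    (hRS : Disjoint R S) (hnoarc : ∀ q ∈ Q, ∀ s ∈ S, ¬ Adj A q s)
    (hR : ∀ r ∈ R, (∃ q ∈ Q, A q r) ∧ ∃ q ∈ Q, A r q) {r s t : V} (hr : r ∈ R) (hs : s ∈ S)
    (ht : t ∈ S) (hrs : ArcLike H A 1 2 r s) (hst : ArcLike H A 2 3 s t) : Adj A r t := by
  obtain ⟨q, hq, hqr⟩ := exists_arcLike_mem ((hH.2 0 1).2 (by decide)) (hR r hr)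
  by_contra hrt
  exact hfree (hasInducedCopy_of_arcLike hH hA hqr hrs hst (hQS.ne_of_mem hq hs)
    (hQS.ne_of_mem hq ht) (hRS.ne_of_mem hr ht) (hnoarc q hq s hs) (hnoarc q hq t ht) hrt)

theorem adj_of_arcLike_of_arcLike_rev {H : Fin 4 → Fin 4 → Prop} (hH : IsP4Orientation H)
    (hA : Oriented A) (hfree : Free A H) {Q R S : Set V} (hQS : Disjoint Q S)
    (hRS : Disjoint R S) (hnoarc : ∀ q ∈ Q, ∀ s ∈ S, ¬ Adj A q s)
    (hR : ∀ r ∈ R, (∃ q ∈ Q, A q r) ∧ ∃ q ∈ Q, A r q) {r s t : V} (hr : r ∈ R) (hs : s ∈ S)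
    (ht : t ∈ S) (hrs : ArcLike H A 2 1 r s) (hst : ArcLike H A 1 0 s t) : Adj A r t := by
  obtain ⟨q, hq, hqr⟩ := exists_arcLike_mem ((hH.2 3 2).2 (by decide)) (hR r hr)
  by_contra hrt
  exact hfree (hasInducedCopy_of_arcLike hH hA (arcLike_comm.1 hst) (arcLike_comm.1 hrs)
    (arcLike_comm.1 hqr) (hRS.ne_of_mem hr ht).symm (hQS.ne_of_mem hq ht).symm
    (hQS.ne_of_mem hq hs).symm (fun h => hrt (adj_comm.1 h))
    (fun h => hnoarc q hq t ht (adj_comm.1 h)) (fun h => hnoarc q hq s hs (adj_comm.1 h)))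

theorem dichi_QRS_general {V : Type*} [Fintype V]
    (H : Fin 4 → Fin 4 → Prop) (hH : IsP4Orientation H)
    (A : V → V → Prop) (hA : Oriented A) (hfree : Free A H)
    (Q R S : Set V)
    (hQS : Disjoint Q S) (hRS : Disjoint R S)
    (hnoarc : ∀ q ∈ Q, ∀ s ∈ S, ¬ Adj A q s)
    (hR : ∀ r ∈ R, (∃ q ∈ Q, A q r) ∧ ∃ q ∈ Q, A r q)
    (hS : ∀ s ∈ S, ∃ r ∈ R, Adj A s r)
    (γ : ℕ) (hγ : ∀ r ∈ R, dichi A (nbr A r) ≤ γ) :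
    dichi A S ≤ 2 * γ := by
  obtain ⟨ρ, hρ⟩ := exists_isLeastNbrIn (Fintype.equivFin V) hS
  have hcol : ∀ r ∈ R, DicolorableOn A (nbr A r) γ :=
    fun r hr => dicolorableOn_of_dichi_le hA (hγ r hr)
  have hfwd : DicolorableOn A {s ∈ S | ArcLike H A 1 2 (ρ s) s} γ :=
    dicolorableOn_of_isLeastNbrIn (Fintype.equivFin V).injective hcol (fun s hs => hρ s hs.1)
      (forall_arc_adj_or_of_arcLike ((hH.2 2 3).2 (by decide)) fun s hs t ht hst =>
        adj_of_arcLike_of_arcLike hH hA hfree hQS hRS hnoarc hR (hρ s hs.1).1 hs.1 ht.1 hs.2 hst)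
  have hrev : DicolorableOn A {s ∈ S | ArcLike H A 2 1 (ρ s) s} γ :=
    dicolorableOn_of_isLeastNbrIn (Fintype.equivFin V).injective hcol (fun s hs => hρ s hs.1)
      (forall_arc_adj_or_of_arcLike ((hH.2 1 0).2 (by decide)) fun s hs t ht hst =>
        adj_of_arcLike_of_arcLike_rev hH hA hfree hQS hRS hnoarc hR (hρ s hs.1).1 hs.1 ht.1
          hs.2 hst)
  have hsplit : S ⊆ {s ∈ S | ArcLike H A 1 2 (ρ s) s} ∪ {s ∈ S | ArcLike H A 2 1 (ρ s) s} :=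
    fun s hs => (arcLike_or_arcLike_of_adj ((hH.2 1 2).2 (by decide)) (hρ s hs).2.1).imp
      (⟨hs, ·⟩) (⟨hs, ·⟩)
  exact dichi_le_of_dicolorableOn (two_mul γ ▸ (hfwd.union hrev).subset hsplit)

/-- the `Q, R, S` lemma: no arc between `Q` and `S`, every vertex of
`R` has an in- and an out-neighbor in `Q`, every vertex of `S` has a neighbor in
`R`, and `χ⃗(N(r)) ≤ γ` for every `r ∈ R`; then `χ⃗(S) ≤ 2γ`. -/
theorem dichi_QRS {V : Type*} [Fintype V]
    (H : Fin 4 → Fin 4 → Prop) (hH : IsP4Orientation H)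
    (A : V → V → Prop) (hA : Oriented A) (hfree : Free A H)
    (Q R S : Set V)
    (hcover : Q ∪ R ∪ S = Set.univ)
    (hQR : Disjoint Q R) (hQS : Disjoint Q S) (hRS : Disjoint R S)
    (hnoarc : ∀ q ∈ Q, ∀ s ∈ S, ¬ Adj A q s)
    (hR : ∀ r ∈ R, (∃ q ∈ Q, A q r) ∧ ∃ q ∈ Q, A r q)
    (hS : ∀ s ∈ S, ∃ r ∈ R, Adj A s r)
    (γ : ℕ) (hγ : ∀ r ∈ R, dichi A (nbr A r) ≤ γ) :
    dichi A S ≤ 2 * γ :=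
  dichi_QRS_general H hH A hA hfree Q R S hQS hRS hnoarc hR hS γ hγ

end DichiP4
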